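/- If two genotypes g and h have different degree, then (W_0²)_{g,h} = 0; equivalently, the columns of W_0 indexed by g and h are orthogonal. -/

import Mathlib

/-!
Summing over the middle index, `∑ x, W0 x g * W0 x h` factors over the loci as
`∏ i, ∑ y, μ(y, g i) μ(y, h i)`. If `deg g ≠ deg h`, some locus `i` has exactly one of `g i`, `h i`
equal to `0`; since `μ(y, 0) = 1`, that factor is a column sum `∑ y, μ(y, a)` with `a ≠ 0`, which
vanishes because the `+1` at `y = 0` cancels the `-1` at `y = a`. As `W0` is symmetric, this column
inner product is also the entry `(W0 * W0) g h`.
-/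

def wronMu {m : ℕ} [NeZero m] (x y : Fin m) : ℤ :=
  if x = 0 ∨ y = 0 then 1 else if x = y then -1 else 0

def W0 {n : ℕ} (m : Fin n → ℕ) [∀ i, NeZero (m i)] :
    Matrix (∀ i, Fin (m i)) (∀ i, Fin (m i)) ℤ :=
  fun g h => ∏ i, wronMu (g i) (h i)

def deg {n : ℕ} {m : Fin n → ℕ} [∀ i, NeZero (m i)] (g : ∀ i, Fin (m i)) : ℕ :=
  (Finset.univ.filter fun i => g i ≠ 0).card

section wronMu

variable {m : ℕ} [NeZero m]

theorem wronMu_comm (x y : Fin m) : wronMu x y = wronMu y x := by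
  unfold wronMu
  by_cases hxy : x = y
  · simp [hxy]
  · simp [hxy, Ne.symm hxy, or_comm]

@[simp]
theorem wronMu_zero_right (x : Fin m) : wronMu x 0 = 1 := by
  simp [wronMu]

theorem wronMu_eq_of_ne_zero_right {a : Fin m} (ha : a ≠ 0) (x : Fin m) :
    wronMu x a = (if x = 0 then 1 else 0) + (if x = a then -1 else 0) := by
  unfold wronMu
  by_cases hx : x = 0
  · simp [hx, Ne.symm ha]
  · simp [hx, ha]

theorem sum_wronMu_left_eq_zero {a : Fin m} (ha : a ≠ 0) : ∑ x : Fin m, wronMu x a = 0 := by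
  simp [wronMu_eq_of_ne_zero_right ha, Finset.sum_add_distrib]

theorem sum_wronMu_mul_wronMu_eq_zero {a b : Fin m} (hab : ¬(a = 0 ↔ b = 0)) :
    ∑ x : Fin m, wronMu x a * wronMu x b = 0 := by
  by_cases ha : a = 0
  · have hb : b ≠ 0 := fun hb => hab ⟨fun _ => hb, fun _ => ha⟩
    simpa [ha] using sum_wronMu_left_eq_zero hb
  · have hb : b = 0 := by tauto
    simpa [hb] using sum_wronMu_left_eq_zero ha

end wronMu

section W0

variable {n : ℕ} (m : Fin n → ℕ) [∀ i, NeZero (m i)]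

theorem W0_isSymm : (W0 m).IsSymm :=
  Matrix.IsSymm.ext fun g h => Finset.prod_congr rfl fun i _ => wronMu_comm (h i) (g i)

theorem sum_W0_mul_W0_eq_prod (g h : ∀ i, Fin (m i)) :
    ∑ x, W0 m x g * W0 m x h = ∏ i, ∑ y : Fin (m i), wronMu y (g i) * wronMu y (h i) := by
  simp only [W0, ← Finset.prod_mul_distrib]
  exact (Fintype.prod_sum fun i (y : Fin (m i)) => wronMu y (g i) * wronMu y (h i)).symm

theorem W0_mul_W0_apply (g h : ∀ i, Fin (m i)) :
    (W0 m * W0 m) g h = ∑ x, W0 m x g * W0 m x h := by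
  simp only [Matrix.mul_apply, (W0_isSymm m).apply]

variable {m}

theorem exists_zero_xor_of_deg_ne {g h : ∀ i, Fin (m i)} (hdeg : deg g ≠ deg h) :
    ∃ i, ¬(g i = 0 ↔ h i = 0) := by
  by_contra! hiff
  exact hdeg (congrArg Finset.card (Finset.filter_congr fun i _ => (hiff i).not))

end W0

theorem W0_sq_zero_of_deg_ne {n : ℕ} (m : Fin n → ℕ) [∀ i, NeZero (m i)]
    (g h : ∀ i, Fin (m i)) (hdeg : deg g ≠ deg h) :
    (W0 m * W0 m) g h = 0 ∧ ∑ x : ∀ i, Fin (m i), W0 m x g * W0 m x h = 0 := by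
  obtain ⟨i, hi⟩ := exists_zero_xor_of_deg_ne hdeg
  have hcols : ∑ x, W0 m x g * W0 m x h = 0 := by
    rw [sum_W0_mul_W0_eq_prod]
    exact Finset.prod_eq_zero (Finset.mem_univ i) (sum_wronMu_mul_wronMu_eq_zero hi)
  exact ⟨(W0_mul_W0_apply m g h).trans hcols, hcols⟩
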